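/- arXiv:1611.00084 — 9 statements merged into one kernel-verified Lean document; each statement's English description precedes it below -/
import Mathlib

section
/- There exists a pure partial plane of order 6 of size 25. Concretely, on the point set {0,1,...,42}, the collection of 25 lines {0,1,2,3,4,5,6}, {0,7,8,9,10,11,12}, {0,13,14,15,16,17,18}, {0,19,20,21,22,23,24}, {0,25,26,27,28,29,30}, {0,31,32,33,34,35,36}, {0,37,38,39,40,41,42}, {1,7,13,19,25,31,37}, {1,8,14,20,26,32,38}, {1,9,15,21,27,33,39}, {1,10,16,22,28,34,40}, {1,11,17,23,29,35,41}, {1,12,18,24,30,36,42}, {2,7,14,21,28,35,42}, {2,8,13,22,27,36,41}, {2,9,16,23,30,31,38}, {2,10,15,24,29,32,37}, {2,11,18,19,26,34,39}, {2,12,17,20,25,33,40}, {3,7,15,20,30,34,41}, {3,9,14,19,29,36,40}, {3,10,13,23,26,33,42}, {4,7,18,22,29,33,38}, {4,11,13,21,30,32,40}, {4,12,14,23,27,34,37} is a pure partial plane of order 6. -/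
/-- A pure partial plane (PPP) of order `n`: a finite collection of distinct lines,
each an `(n+1)`-element subset of a point set of `n^2+n+1` points, such that any two
distinct lines intersect in exactly one point. -/
def IsPPP (n : ℕ) (L : Finset (Finset (Fin (n ^ 2 + n + 1)))) : Prop :=
  (∀ ℓ ∈ L, ℓ.card = n + 1) ∧
    ∀ ℓ₁ ∈ L, ∀ ℓ₂ ∈ L, ℓ₁ ≠ ℓ₂ → (ℓ₁ ∩ ℓ₂).card = 1

/-- The degree of a point: the number of lines of the collection containing it. -/
def ppDeg {n : ℕ} (L : Finset (Finset (Fin (n ^ 2 + n + 1))))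
    (p : Fin (n ^ 2 + n + 1)) : ℕ :=
  (L.filter fun ℓ => p ∈ ℓ).card

/-- The explicit 25 lines on the point set {0,...,42}. -/
def lines25 : Finset (Finset (Fin (6 ^ 2 + 6 + 1))) :=
  {{0, 1, 2, 3, 4, 5, 6},
     {0, 7, 8, 9, 10, 11, 12},
     {0, 13, 14, 15, 16, 17, 18},
     {0, 19, 20, 21, 22, 23, 24},
     {0, 25, 26, 27, 28, 29, 30},
     {0, 31, 32, 33, 34, 35, 36},
     {0, 37, 38, 39, 40, 41, 42},
     {1, 7, 13, 19, 25, 31, 37},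
     {1, 8, 14, 20, 26, 32, 38},
     {1, 9, 15, 21, 27, 33, 39},
     {1, 10, 16, 22, 28, 34, 40},
     {1, 11, 17, 23, 29, 35, 41},
     {1, 12, 18, 24, 30, 36, 42},
     {2, 7, 14, 21, 28, 35, 42},
     {2, 8, 13, 22, 27, 36, 41},
     {2, 9, 16, 23, 30, 31, 38},
     {2, 10, 15, 24, 29, 32, 37},
     {2, 11, 18, 19, 26, 34, 39},
     {2, 12, 17, 20, 25, 33, 40},
     {3, 7, 15, 20, 30, 34, 41},
     {3, 9, 14, 19, 29, 36, 40},
     {3, 10, 13, 23, 26, 33, 42},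
     {4, 7, 18, 22, 29, 33, 38},
     {4, 11, 13, 21, 30, 32, 40},
     {4, 12, 14, 23, 27, 34, 37}}

theorem List.nodup_of_pairwise_card_inter_eq_one {α : Type*} [DecidableEq α] {k : ℕ}
    (hk : k ≠ 1) {l : List (Finset α)} (hcard : ∀ s ∈ l, s.card = k)
    (hpair : l.Pairwise fun s t => (s ∩ t).card = 1) : l.Nodup :=
  hpair.imp_of_mem fun hs _ hst hEq => hk <| by
    subst hEq
    rwa [Finset.inter_self, hcard _ hs] at hst

theorem isPPP_toFinset {n : ℕ} {l : List (Finset (Fin (n ^ 2 + n + 1)))}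
    (hcard : ∀ ℓ ∈ l, ℓ.card = n + 1) (hpair : l.Pairwise fun ℓ₁ ℓ₂ => (ℓ₁ ∩ ℓ₂).card = 1) :
    IsPPP n l.toFinset := by
  have : Std.Symm fun ℓ₁ ℓ₂ : Finset (Fin (n ^ 2 + n + 1)) => (ℓ₁ ∩ ℓ₂).card = 1 :=
    ⟨fun ℓ₁ ℓ₂ h => by rwa [Finset.inter_comm]⟩
  simp only [IsPPP, List.mem_toFinset]
  exact ⟨hcard, fun _ h₁ _ h₂ hne => hpair.forall h₁ h₂ hne⟩

/- Checking `lines25` directly would make the kernel compare lines for equality, which is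
very slow; over a list, the lines are distinct because of the intersection condition. -/
def lines25List : List (Finset (Fin (6 ^ 2 + 6 + 1))) :=
  [{0, 1, 2, 3, 4, 5, 6},
   {0, 7, 8, 9, 10, 11, 12},
   {0, 13, 14, 15, 16, 17, 18},
   {0, 19, 20, 21, 22, 23, 24},
   {0, 25, 26, 27, 28, 29, 30},
   {0, 31, 32, 33, 34, 35, 36},
   {0, 37, 38, 39, 40, 41, 42},
   {1, 7, 13, 19, 25, 31, 37},
   {1, 8, 14, 20, 26, 32, 38},
   {1, 9, 15, 21, 27, 33, 39},
   {1, 10, 16, 22, 28, 34, 40},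
   {1, 11, 17, 23, 29, 35, 41},
   {1, 12, 18, 24, 30, 36, 42},
   {2, 7, 14, 21, 28, 35, 42},
   {2, 8, 13, 22, 27, 36, 41},
   {2, 9, 16, 23, 30, 31, 38},
   {2, 10, 15, 24, 29, 32, 37},
   {2, 11, 18, 19, 26, 34, 39},
   {2, 12, 17, 20, 25, 33, 40},
   {3, 7, 15, 20, 30, 34, 41},
   {3, 9, 14, 19, 29, 36, 40},
   {3, 10, 13, 23, 26, 33, 42},
   {4, 7, 18, 22, 29, 33, 38},
   {4, 11, 13, 21, 30, 32, 40},
   {4, 12, 14, 23, 27, 34, 37}]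

theorem lines25_eq_toFinset : lines25 = lines25List.toFinset := by
  simp only [lines25, lines25List, List.toFinset_cons, List.toFinset_nil,
    LawfulSingleton.insert_empty_eq]

/- `List.Forall` rather than `∀ ℓ ∈ lines25List`, whose `Decidable` instance would range over
all subsets of the point set. -/
theorem card_eq_seven_of_mem_lines25List : ∀ ℓ ∈ lines25List, ℓ.card = 7 :=
  List.forall_iff_forall_mem.mp (by decide +kernel)

theorem lines25List_pairwise_card_inter_eq_one :
    lines25List.Pairwise fun ℓ₁ ℓ₂ => (ℓ₁ ∩ ℓ₂).card = 1 := by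
  decide +kernel

/-- There exists a pure partial plane of order 6 of size 25: the explicit collection
`lines25` of 25 lines is a pure partial plane of order 6 with 25 lines. -/
theorem exists_ppp_order_six_size_25 : IsPPP 6 lines25 ∧ lines25.card = 25 := by
  rw [lines25_eq_toFinset]
  exact ⟨isPPP_toFinset card_eq_seven_of_mem_lines25List lines25List_pairwise_card_inter_eq_one,
    List.toFinset_card_of_nodup <| List.nodup_of_pairwise_card_inter_eq_one (by norm_num)
      card_eq_seven_of_mem_lines25List lines25List_pairwise_card_inter_eq_one⟩
end

section
/- In a saturated pure partial plane of order n (with n ≥ 1), no point has degree exactly n; that is, no point lies on exactly n of the lines. -/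
/-- A PPP is saturated if no `(n+1)`-element subset of the point set not already in the
collection intersects every line of the collection in exactly one point. -/
def IsSaturated (n : ℕ) (L : Finset (Finset (Fin (n ^ 2 + n + 1)))) : Prop :=
  ¬ ∃ ℓ' : Finset (Fin (n ^ 2 + n + 1)), ℓ' ∉ L ∧ ℓ'.card = n + 1 ∧
      ∀ ℓ ∈ L, (ℓ' ∩ ℓ).card = 1

open Finset

section PartialLinearSpace

variable {α : Type*} [DecidableEq α] {L : Finset (Finset α)} {p : α} {ℓ m : Finset α} {k : ℕ}

def PairwiseMeetOnce (L : Finset (Finset α)) : Prop :=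
  ∀ ℓ₁ ∈ L, ∀ ℓ₂ ∈ L, ℓ₁ ≠ ℓ₂ → (ℓ₁ ∩ ℓ₂).card = 1

def pencil (L : Finset (Finset α)) (p : α) : Finset (Finset α) :=
  L.filter fun ℓ => p ∈ ℓ

/-- Erasing `p` from each line through `p` makes the union disjoint. -/
def pencilSupport (L : Finset (Finset α)) (p : α) : Finset α :=
  insert p ((pencil L p).biUnion fun ℓ => ℓ.erase p)

@[simp]
theorem mem_pencil : ℓ ∈ pencil L p ↔ ℓ ∈ L ∧ p ∈ ℓ :=
  mem_filter

theorem subset_pencilSupport (h : ℓ ∈ pencil L p) : ℓ ⊆ pencilSupport L p := by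
  intro x hx
  rcases eq_or_ne x p with rfl | hxp
  · exact mem_insert_self _ _
  · exact mem_insert_of_mem (mem_biUnion.mpr ⟨ℓ, h, mem_erase.mpr ⟨hxp, hx⟩⟩)

theorem inter_eq_singleton_of_mem_pencil {ℓ₁ ℓ₂ : Finset α} (hL : PairwiseMeetOnce L)
    (h₁ : ℓ₁ ∈ pencil L p) (h₂ : ℓ₂ ∈ pencil L p) (hne : ℓ₁ ≠ ℓ₂) : ℓ₁ ∩ ℓ₂ = {p} := by
  rw [mem_pencil] at h₁ h₂
  obtain ⟨a, ha⟩ := card_eq_one.mp (hL ℓ₁ h₁.1 ℓ₂ h₂.1 hne)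
  have hp : p ∈ ℓ₁ ∩ ℓ₂ := mem_inter.mpr ⟨h₁.2, h₂.2⟩
  rw [ha, mem_singleton] at hp
  rw [ha, hp]

theorem card_pencilSupport (hL : PairwiseMeetOnce L) (hcard : ∀ ℓ ∈ L, ℓ.card = k + 1) :
    (pencilSupport L p).card = (pencil L p).card * k + 1 := by
  have hdisj : (pencil L p : Set (Finset α)).PairwiseDisjoint fun ℓ => ℓ.erase p := by
    intro ℓ₁ h₁ ℓ₂ h₂ hne
    refine disjoint_left.mpr fun x hx₁ hx₂ => (ne_of_mem_erase hx₁) ?_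
    have hx : x ∈ ℓ₁ ∩ ℓ₂ := mem_inter.mpr ⟨mem_of_mem_erase hx₁, mem_of_mem_erase hx₂⟩
    rwa [inter_eq_singleton_of_mem_pencil hL h₁ h₂ hne, mem_singleton] at hx
  have hp : p ∉ (pencil L p).biUnion fun ℓ => ℓ.erase p := by simp
  rw [pencilSupport, card_insert_of_notMem hp, card_biUnion hdisj,
    sum_congr rfl fun ℓ h => ?_, sum_const, smul_eq_mul]
  rw [mem_pencil] at h
  rw [card_erase_of_mem h.2, hcard ℓ h.1, Nat.add_sub_cancel]

/-- A line missing `p` meets each line through `p` once, and in distinct points. -/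
theorem card_inter_pencilSupport (hL : PairwiseMeetOnce L) (hm : m ∈ L) (hpm : p ∉ m) :
    (m ∩ pencilSupport L p).card = (pencil L p).card := by
  have hunion : m ∩ pencilSupport L p = (pencil L p).biUnion fun ℓ => m ∩ ℓ := by
    ext x
    simp only [pencilSupport, mem_inter, mem_insert, mem_biUnion, mem_erase]
    constructor
    · rintro ⟨hxm, rfl | ⟨ℓ, hℓ, -, hxℓ⟩⟩
      · exact absurd hxm hpm
      · exact ⟨ℓ, hℓ, hxm, hxℓ⟩
    · rintro ⟨ℓ, hℓ, hxm, hxℓ⟩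
      exact ⟨hxm, Or.inr ⟨ℓ, hℓ, ne_of_mem_of_not_mem hxm hpm, hxℓ⟩⟩
  have hdisj : (pencil L p : Set (Finset α)).PairwiseDisjoint fun ℓ => m ∩ ℓ := by
    intro ℓ₁ h₁ ℓ₂ h₂ hne
    refine disjoint_left.mpr fun x hx₁ hx₂ => hpm ?_
    have hx : x ∈ ℓ₁ ∩ ℓ₂ := mem_inter.mpr ⟨(mem_inter.mp hx₁).2, (mem_inter.mp hx₂).2⟩
    rw [inter_eq_singleton_of_mem_pencil hL h₁ h₂ hne, mem_singleton] at hx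
    exact hx ▸ (mem_inter.mp hx₁).1
  rw [hunion, card_biUnion hdisj, sum_congr rfl fun ℓ h => ?_, sum_const, smul_eq_mul, mul_one]
  rw [mem_pencil] at h
  exact hL m hm ℓ h.1 (ne_of_mem_of_not_mem' h.2 hpm).symm

end PartialLinearSpace

section Transversal

variable {α : Type*} [DecidableEq α] [Fintype α] {L : Finset (Finset α)} {p : α}
  {ℓ m : Finset α} {k : ℕ}

def pencilTransversal (L : Finset (Finset α)) (p : α) : Finset α :=
  insert p (pencilSupport L p)ᶜ

theorem pencilTransversal_inter_of_mem_pencil (h : ℓ ∈ pencil L p) :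
    pencilTransversal L p ∩ ℓ = {p} := by
  refine eq_singleton_iff_unique_mem.mpr
    ⟨mem_inter.mpr ⟨mem_insert_self _ _, (mem_pencil.mp h).2⟩, fun x hx => ?_⟩
  obtain ⟨hxt, hxℓ⟩ := mem_inter.mp hx
  rcases mem_insert.mp hxt with rfl | hx
  · rfl
  · exact absurd (subset_pencilSupport h hxℓ) (mem_compl.mp hx)

theorem pencilTransversal_notMem (hcard : ∀ ℓ ∈ L, ℓ.card = k + 1)
    (hdeg : (pencil L p).card = k) : pencilTransversal L p ∉ L := by
  intro ht
  have htp : pencilTransversal L p ∈ pencil L p := mem_pencil.mpr ⟨ht, mem_insert_self _ _⟩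
  have hsingle := pencilTransversal_inter_of_mem_pencil htp
  rw [inter_self] at hsingle
  have hk : k = 0 := by simpa [hsingle] using hcard _ ht
  rw [hk, card_eq_zero] at hdeg
  simp [hdeg] at htp

theorem card_pencilTransversal (hL : PairwiseMeetOnce L) (hcard : ∀ ℓ ∈ L, ℓ.card = k + 1) :
    (pencilTransversal L p).card = Fintype.card α - (pencil L p).card * k := by
  have hsupp := card_pencilSupport (p := p) hL hcard
  have hle := card_le_univ (pencilSupport L p)
  have hp : p ∉ (pencilSupport L p)ᶜ := by simp [pencilSupport]
  rw [pencilTransversal, card_insert_of_notMem hp, card_compl]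
  omega

theorem card_pencilTransversal_inter (hL : PairwiseMeetOnce L)
    (hcard : ∀ ℓ ∈ L, ℓ.card = k + 1) (hdeg : (pencil L p).card = k) (hm : m ∈ L) :
    (pencilTransversal L p ∩ m).card = 1 := by
  by_cases hpm : p ∈ m
  · rw [pencilTransversal_inter_of_mem_pencil (mem_pencil.mpr ⟨hm, hpm⟩), card_singleton]
  · have hsdiff : pencilTransversal L p ∩ m = m \ pencilSupport L p := by
      ext x
      simp only [pencilTransversal, mem_inter, mem_insert, mem_compl, mem_sdiff]
      constructor
      · rintro ⟨rfl | hx, hxm⟩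
        · exact absurd hxm hpm
        · exact ⟨hxm, hx⟩
      · rintro ⟨hxm, hx⟩
        exact ⟨Or.inr hx, hxm⟩
    have hsplit := card_inter_add_card_sdiff m (pencilSupport L p)
    rw [card_inter_pencilSupport hL hm hpm, hdeg, hcard m hm] at hsplit
    rw [hsdiff]
    omega

end Transversal

theorem sppp_no_point_of_degree_n_general (n : ℕ)
    (L : Finset (Finset (Fin (n ^ 2 + n + 1))))
    (hL : IsPPP n L) (hsat : IsSaturated n L) (p : Fin (n ^ 2 + n + 1)) :
    ppDeg L p ≠ n := by
  intro hdeg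
  obtain ⟨hcard, hint⟩ := hL
  have hdeg : (pencil L p).card = n := hdeg
  refine hsat ⟨pencilTransversal L p, pencilTransversal_notMem hcard hdeg, ?_,
    fun m hm => card_pencilTransversal_inter hint hcard hdeg hm⟩
  rw [card_pencilTransversal hint hcard, hdeg, Fintype.card_fin, sq]
  omega

/-- In a saturated pure partial plane of order `n ≥ 1`, no point lies on exactly `n`
lines. -/
theorem sppp_no_point_of_degree_n (n : ℕ) (hn : 1 ≤ n)
    (L : Finset (Finset (Fin (n ^ 2 + n + 1))))
    (hL : IsPPP n L) (hsat : IsSaturated n L) (p : Fin (n ^ 2 + n + 1)) :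
    ppDeg L p ≠ n :=
  sppp_no_point_of_degree_n_general n L hL hsat p
end

section
/- For any saturated pure partial plane of even order n ≥ 2, there exists a point whose degree is at least 3, i.e., a point lying on at least 3 lines. -/
/-!
Suppose every point lies on at most two lines; we build an `(n+1)`-set that meets every line
exactly once, contradicting saturation. Counting incidences on a line `ℓ` gives
`∑ p ∈ ℓ, deg p = (n + 1) + (#L - 1)`, hence `#L ≤ n + 2`.
If `#L ≤ n + 1`, every line has a point lying on no other line, and these points, padded with
points on no line, form the new line.
If `#L = n + 2`, every covered point lies on exactly two lines, so only `(n+2)(n+1)/2` points are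
covered. For even `n` the lines split into `(n+2)/2` pairs; the intersection points of the pairs,
padded with `n/2` uncovered points, form the new line.
-/

open Finset

section Lines

variable {α : Type*} [DecidableEq α] {n : ℕ} {L : Finset (Finset α)}

theorem sum_card_filter_mem_eq_sum_card_inter (X : Finset α) :
    ∑ p ∈ X, #{ℓ ∈ L | p ∈ ℓ} = ∑ ℓ ∈ L, #(X ∩ ℓ) := by
  simpa [bipartiteAbove, bipartiteBelow, filter_mem_eq_inter] using
    sum_card_bipartiteAbove_eq_sum_card_bipartiteBelow (s := X) (t := L) (r := (· ∈ ·))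

theorem eq_or_eq_of_card_filter_mem_le_two {p : α} (hp : #{ℓ ∈ L | p ∈ ℓ} ≤ 2)
    {a b c : Finset α} (ha : a ∈ L) (hb : b ∈ L) (hc : c ∈ L) (hab : a ≠ b)
    (hpa : p ∈ a) (hpb : p ∈ b) (hpc : p ∈ c) : c = a ∨ c = b := by
  by_contra! hne
  refine (two_lt_card.mpr ⟨a, ?_, b, ?_, c, ?_, hab, hne.1.symm, hne.2.symm⟩).not_ge hp <;>
    simp [*]

theorem sum_card_filter_mem_of_mem
    (hinter : ∀ ℓ₁ ∈ L, ∀ ℓ₂ ∈ L, ℓ₁ ≠ ℓ₂ → #(ℓ₁ ∩ ℓ₂) = 1) {ℓ : Finset α} (hℓ : ℓ ∈ L) :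
    ∑ p ∈ ℓ, #{m ∈ L | p ∈ m} = #ℓ + (#L - 1) := by
  rw [sum_card_filter_mem_eq_sum_card_inter, ← add_sum_erase L _ hℓ, inter_self,
    sum_congr rfl fun m hm => hinter ℓ hℓ m (mem_erase.mp hm).2 (mem_erase.mp hm).1.symm,
    sum_const, smul_eq_mul, mul_one, card_erase_of_mem hℓ]

theorem exists_mem_forall_mem_imp_eq_of_card_le
    (hinter : ∀ ℓ₁ ∈ L, ∀ ℓ₂ ∈ L, ℓ₁ ≠ ℓ₂ → #(ℓ₁ ∩ ℓ₂) = 1) {ℓ : Finset α} (hℓ : ℓ ∈ L)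
    (hL : #L ≤ #ℓ) : ∃ p ∈ ℓ, ∀ m ∈ L, p ∈ m → m = ℓ := by
  by_contra! hshared
  have hdeg : ∀ p ∈ ℓ, 2 ≤ #{m ∈ L | p ∈ m} := fun p hp => by
    obtain ⟨m, hm, hpm, hmℓ⟩ := hshared p hp
    exact one_lt_card.mpr ⟨m, by simp [hm, hpm], ℓ, by simp [hℓ, hp], hmℓ⟩
  have := card_nsmul_le_sum ℓ _ 2 hdeg
  rw [sum_card_filter_mem_of_mem hinter hℓ, smul_eq_mul] at this
  have : 0 < #L := card_pos.mpr ⟨ℓ, hℓ⟩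
  omega

theorem card_le_add_one_of_card_filter_mem_le_two
    (hinter : ∀ ℓ₁ ∈ L, ∀ ℓ₂ ∈ L, ℓ₁ ≠ ℓ₂ → #(ℓ₁ ∩ ℓ₂) = 1) {ℓ : Finset α} (hℓ : ℓ ∈ L)
    (hdeg : ∀ p ∈ ℓ, #{m ∈ L | p ∈ m} ≤ 2) : #L ≤ #ℓ + 1 := by
  have := sum_le_card_nsmul ℓ _ 2 hdeg
  rw [sum_card_filter_mem_of_mem hinter hℓ, smul_eq_mul] at this
  omega

theorem card_filter_mem_eq_two_of_card_eq
    (hinter : ∀ ℓ₁ ∈ L, ∀ ℓ₂ ∈ L, ℓ₁ ≠ ℓ₂ → #(ℓ₁ ∩ ℓ₂) = 1) {ℓ : Finset α} (hℓ : ℓ ∈ L)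
    (hdeg : ∀ p ∈ ℓ, #{m ∈ L | p ∈ m} ≤ 2) (hL : #L = #ℓ + 1) :
    ∀ p ∈ ℓ, #{m ∈ L | p ∈ m} = 2 := by
  refine (sum_eq_sum_iff_of_le hdeg).mp ?_
  rw [sum_card_filter_mem_of_mem hinter hℓ, sum_const, smul_eq_mul]
  omega

theorem mul_card_biUnion_eq_sum_card {d : ℕ}
    (hdeg : ∀ p ∈ L.biUnion id, #{ℓ ∈ L | p ∈ ℓ} = d) :
    d * #(L.biUnion id) = ∑ ℓ ∈ L, #ℓ := by
  rw [mul_comm, ← smul_eq_mul, ← sum_const, ← sum_congr rfl hdeg,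
    sum_card_filter_mem_eq_sum_card_inter]
  exact sum_congr rfl fun ℓ hℓ => congrArg card (inter_eq_right.mpr (subset_biUnion_of_mem id hℓ))

theorem exists_transversal_of_centers [Fintype α] {ι : Type*} [Fintype ι] (center : ι → α)
    (block : L → ι) (hblock : Function.Surjective block)
    (hcenter : ∀ (ℓ : L) i, center i ∈ (ℓ : Finset α) ↔ block ℓ = i)
    (hι : Fintype.card ι ≤ n + 1) (hfree : n + 1 ≤ Fintype.card ι + #(L.biUnion id)ᶜ) :
    ∃ ℓ' : Finset α, #ℓ' = n + 1 ∧ ∀ ℓ ∈ L, #(ℓ' ∩ ℓ) = 1 := by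
  have hcovered : ∀ i, ∃ ℓ ∈ L, center i ∈ ℓ := fun i => by
    obtain ⟨ℓ, rfl⟩ := hblock i
    exact ⟨ℓ, ℓ.2, (hcenter ℓ _).mpr rfl⟩
  have hinj : Function.Injective center := fun i j hij => by
    obtain ⟨ℓ, rfl⟩ := hblock i
    exact (hcenter ℓ j).mp (hij ▸ (hcenter ℓ _).mpr rfl)
  obtain ⟨T, hT, hTcard⟩ :=
    exists_subset_card_eq (s := (L.biUnion id)ᶜ) (by omega : n + 1 - Fintype.card ι ≤ _)
  have hdisj : Disjoint (univ.image center) T := by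
    refine disjoint_left.mpr fun p hp hpT => ?_
    obtain ⟨i, -, rfl⟩ := mem_image.mp hp
    obtain ⟨ℓ, hℓ, hiℓ⟩ := hcovered i
    exact mem_compl.mp (hT hpT) (mem_biUnion.mpr ⟨ℓ, hℓ, hiℓ⟩)
  refine ⟨univ.image center ∪ T, ?_, fun ℓ hℓ => card_eq_one.mpr ⟨center (block ⟨ℓ, hℓ⟩), ?_⟩⟩
  · rw [card_union_of_disjoint hdisj, card_image_of_injective _ hinj, card_univ, hTcard]
    omega
  · ext p
    simp only [mem_inter, mem_union, mem_image, mem_univ, true_and, mem_singleton]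
    constructor
    · rintro ⟨⟨i, rfl⟩ | hpT, hpℓ⟩
      · rw [(hcenter ⟨ℓ, hℓ⟩ i).mp hpℓ]
      · exact absurd (mem_biUnion.mpr ⟨ℓ, hℓ, hpℓ⟩) (mem_compl.mp (hT hpT))
    · rintro rfl
      exact ⟨Or.inl ⟨_, rfl⟩, (hcenter ⟨ℓ, hℓ⟩ _).mpr rfl⟩

theorem exists_transversal_of_card_le_add_one [Fintype α] (hα : n ^ 2 + n + 1 ≤ Fintype.card α)
    (hcard : ∀ ℓ ∈ L, #ℓ = n + 1) (hinter : ∀ ℓ₁ ∈ L, ∀ ℓ₂ ∈ L, ℓ₁ ≠ ℓ₂ → #(ℓ₁ ∩ ℓ₂) = 1)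
    (hL : #L ≤ n + 1) : ∃ ℓ' : Finset α, #ℓ' = n + 1 ∧ ∀ ℓ ∈ L, #(ℓ' ∩ ℓ) = 1 := by
  choose center hcenter using fun ℓ : L =>
    exists_mem_forall_mem_imp_eq_of_card_le hinter ℓ.2 (hL.trans (hcard ℓ ℓ.2).ge)
  have hcovered : #(L.biUnion id) ≤ #L * (n + 1) :=
    (card_biUnion_le.trans_eq (sum_congr rfl hcard)).trans_eq (by simp)
  refine exists_transversal_of_centers center id Function.surjective_id
    (fun ℓ i => ⟨fun h => Subtype.ext ((hcenter i).2 ℓ ℓ.2 h), fun h => h ▸ (hcenter ℓ).1⟩)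
    (by simpa using hL) ?_
  rw [Fintype.card_coe, card_compl]
  rcases hL.lt_or_eq with hlt | heq
  · have : #L * n ≤ n ^ 2 := sq n ▸ Nat.mul_le_mul_right n (by omega)
    have : #L * (n + 1) = #L * n + #L := by ring
    omega
  · omega

theorem card_le_add_two_of_card_filter_mem_le_two (hcard : ∀ ℓ ∈ L, #ℓ = n + 1)
    (hinter : ∀ ℓ₁ ∈ L, ∀ ℓ₂ ∈ L, ℓ₁ ≠ ℓ₂ → #(ℓ₁ ∩ ℓ₂) = 1)
    (hdeg : ∀ p, #{ℓ ∈ L | p ∈ ℓ} ≤ 2) : #L ≤ n + 2 := by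
  obtain rfl | ⟨ℓ, hℓ⟩ := L.eq_empty_or_nonempty
  · simp
  · simpa [hcard ℓ hℓ] using card_le_add_one_of_card_filter_mem_le_two hinter hℓ fun p _ => hdeg p

theorem exists_transversal_of_card_eq_add_two [Fintype α]
    (hα : n ^ 2 + n + 1 ≤ Fintype.card α) (heven : Even n)
    (hcard : ∀ ℓ ∈ L, #ℓ = n + 1) (hinter : ∀ ℓ₁ ∈ L, ∀ ℓ₂ ∈ L, ℓ₁ ≠ ℓ₂ → #(ℓ₁ ∩ ℓ₂) = 1)
    (hdeg : ∀ p, #{ℓ ∈ L | p ∈ ℓ} ≤ 2) (hL : #L = n + 2) :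
    ∃ ℓ' : Finset α, #ℓ' = n + 1 ∧ ∀ ℓ ∈ L, #(ℓ' ∩ ℓ) = 1 := by
  obtain ⟨k, rfl⟩ := heven
  have hcovered : 2 * #(L.biUnion id) = (k + k + 2) * (k + k + 1) := by
    rw [mul_card_biUnion_eq_sum_card, sum_congr rfl hcard, sum_const, hL, smul_eq_mul]
    intro p hp
    obtain ⟨ℓ, hℓ, hpℓ⟩ := mem_biUnion.mp hp
    exact card_filter_mem_eq_two_of_card_eq hinter hℓ (fun p _ => hdeg p)
      (by rw [hL, hcard ℓ hℓ]) p hpℓ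
  -- a perfect matching of the `n + 2` lines: `e (i, false)` is paired with `e (i, true)`
  obtain ⟨e⟩ : Nonempty (Fin (k + 1) × Bool ≃ L) :=
    Fintype.card_eq.mp (by simp [hL]; ring)
  have hne : ∀ i, (e (i, false) : Finset α) ≠ e (i, true) := fun i h => by
    simpa using e.injective (Subtype.ext h)
  have hpair : ∀ i, ∃ p, ∀ b, p ∈ (e (i, b) : Finset α) := fun i => by
    obtain ⟨p, hp⟩ := card_eq_one.mp (hinter _ (e (i, false)).2 _ (e (i, true)).2 (hne i))
    have hmem := hp ▸ mem_singleton_self p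
    exact ⟨p, by simpa [Bool.forall_bool, mem_inter] using hmem⟩
  choose center hcenter using hpair
  refine exists_transversal_of_centers center (fun ℓ => (e.symm ℓ).1)
    (fun i => ⟨e (i, false), by simp⟩) (fun ℓ i => ⟨fun h => ?_, ?_⟩) (by simp) ?_
  · obtain h | h := eq_or_eq_of_card_filter_mem_le_two (hdeg (center i)) (e (i, false)).2
      (e (i, true)).2 ℓ.2 (hne i) (hcenter i false) (hcenter i true) h <;>
    simp [Subtype.ext h]
  · rintro rfl
    simpa using hcenter (e.symm ℓ).1 (e.symm ℓ).2
  · have : #(L.biUnion id) + k ≤ Fintype.card α := by nlinarith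
    rw [Fintype.card_fin, card_compl]
    omega

end Lines

theorem IsSaturated.not_exists_transversal {n : ℕ} {L : Finset (Finset (Fin (n ^ 2 + n + 1)))}
    (hsat : IsSaturated n L) (hn : n ≠ 0) :
    ¬ ∃ ℓ' : Finset (Fin (n ^ 2 + n + 1)), #ℓ' = n + 1 ∧ ∀ ℓ ∈ L, #(ℓ' ∩ ℓ) = 1 := by
  rintro ⟨ℓ', hcard, hmeet⟩
  exact hsat ⟨ℓ', fun hmem => hn (by simpa [hcard] using hmeet ℓ' hmem), hcard, hmeet⟩

/-- For any saturated pure partial plane of even order `n ≥ 2`, some point lies on at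
least 3 lines. -/
theorem sppp_even_order_point_of_degree_ge_three (n : ℕ) (hn : 2 ≤ n) (heven : Even n)
    (L : Finset (Finset (Fin (n ^ 2 + n + 1))))
    (hL : IsPPP n L) (hsat : IsSaturated n L) :
    ∃ p : Fin (n ^ 2 + n + 1), 3 ≤ ppDeg L p := by
  by_contra! hdeg
  replace hdeg : ∀ p, #{ℓ ∈ L | p ∈ ℓ} ≤ 2 := fun p => Nat.le_of_lt_succ (hdeg p)
  have hα : n ^ 2 + n + 1 ≤ Fintype.card (Fin (n ^ 2 + n + 1)) := (Fintype.card_fin _).ge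
  refine hsat.not_exists_transversal (by omega) ?_
  rcases le_or_gt #L (n + 1) with hsmall | hlarge
  · exact exists_transversal_of_card_le_add_one hα hL.1 hL.2 hsmall
  · have := card_le_add_two_of_card_filter_mem_le_two hL.1 hL.2 hdeg
    exact exists_transversal_of_card_eq_add_two hα heven hL.1 hL.2 hdeg (by omega)
end

section
/- For every odd integer n ≥ 3, there exists a saturated pure partial plane of order n in which every point has degree at most 2 (no point lies on more than 2 lines). Such a SPPP of size n+2 can be obtained from n+2 lines in general position in the plane (no two parallel, no three concurrent), using their C(n+2,2) pairwise intersection points. -/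
namespace SPPPAux

/-- The line associated to index `i`: images of all pairs `{i, j}`, `j ≠ i`. -/
def pline {n : ℕ} (f : {s : Finset (Fin (n + 2)) // s.card = 2} ↪ Fin (n ^ 2 + n + 1))
    (i : Fin (n + 2)) : Finset (Fin (n ^ 2 + n + 1)) :=
  (Finset.univ.erase i).attach.image fun j =>
    f ⟨{i, j.1}, Finset.card_pair (Finset.ne_of_mem_erase j.2).symm⟩

lemma mem_pline_iff {n : ℕ} (f : {s : Finset (Fin (n + 2)) // s.card = 2} ↪ Fin (n ^ 2 + n + 1))
    {p : Fin (n ^ 2 + n + 1)} {i : Fin (n + 2)} :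
    p ∈ pline f i ↔ ∃ s : {s : Finset (Fin (n + 2)) // s.card = 2}, f s = p ∧ i ∈ s.1 := by
  constructor
  · intro hp
    obtain ⟨j, _, rfl⟩ := Finset.mem_image.mp hp
    exact ⟨_, rfl, Finset.mem_insert_self _ _⟩
  · rintro ⟨s, rfl, hi⟩
    have hc : (s.1.erase i).card = 1 := by
      rw [Finset.card_erase_of_mem hi, s.2]
    obtain ⟨j, hj⟩ := Finset.card_eq_one.mp hc
    have hjm : j ∈ s.1.erase i := hj ▸ Finset.mem_singleton_self j
    have hji : j ≠ i := Finset.ne_of_mem_erase hjm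
    have hs1 : s.1 = {i, j} := by
      rw [← Finset.insert_erase hi, hj]
    have hjm' : j ∈ Finset.univ.erase i := Finset.mem_erase.mpr ⟨hji, Finset.mem_univ j⟩
    refine Finset.mem_image.mpr ⟨⟨j, hjm'⟩, Finset.mem_attach _ _, ?_⟩
    congr 1
    exact Subtype.ext hs1.symm

lemma pair_eq {n : ℕ} {i k : Fin (n + 2)} (hik : i ≠ k)
    (s : {s : Finset (Fin (n + 2)) // s.card = 2}) (hi : i ∈ s.1) (hk : k ∈ s.1) :
    s.1 = {i, k} := by
  refine (Finset.eq_of_subset_of_card_le ?_ ?_).symm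
  · intro x hx
    rcases Finset.mem_insert.mp hx with rfl | hx
    · exact hi
    · exact (Finset.mem_singleton.mp hx) ▸ hk
  · rw [s.2, Finset.card_pair hik]

lemma card_pline {n : ℕ} (f : {s : Finset (Fin (n + 2)) // s.card = 2} ↪ Fin (n ^ 2 + n + 1))
    (i : Fin (n + 2)) : (pline f i).card = n + 1 := by
  have hinj : Function.Injective (fun j : {x // x ∈ Finset.univ.erase i} =>
      f ⟨{i, j.1}, Finset.card_pair (Finset.ne_of_mem_erase j.2).symm⟩) := by
    intro a b hab
    have h1 := f.injective hab
    have h2 : ({i, a.1} : Finset (Fin (n + 2))) = {i, b.1} := congrArg Subtype.val h1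
    apply Subtype.ext
    have ha : a.1 ∈ ({i, b.1} : Finset (Fin (n + 2))) :=
      h2 ▸ Finset.mem_insert_of_mem (Finset.mem_singleton_self _)
    rcases Finset.mem_insert.mp ha with h | h
    · exact absurd h (Finset.ne_of_mem_erase a.2)
    · exact Finset.mem_singleton.mp h
  rw [pline, Finset.card_image_of_injective _ hinj, Finset.card_attach,
    Finset.card_erase_of_mem (Finset.mem_univ i), Finset.card_univ, Fintype.card_fin]
  omega

lemma pline_inter {n : ℕ} (f : {s : Finset (Fin (n + 2)) // s.card = 2} ↪ Fin (n ^ 2 + n + 1))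
    {i k : Fin (n + 2)} (hik : i ≠ k) :
    pline f i ∩ pline f k = {f ⟨{i, k}, Finset.card_pair hik⟩} := by
  ext p
  simp only [Finset.mem_inter, Finset.mem_singleton, mem_pline_iff]
  constructor
  · rintro ⟨⟨s, rfl, hi⟩, ⟨t, ht, hk⟩⟩
    obtain rfl := f.injective ht
    have heq : t = ⟨{i, k}, Finset.card_pair hik⟩ := Subtype.ext (pair_eq hik t hi hk)
    rw [heq]
  · rintro rfl
    exact ⟨⟨_, rfl, Finset.mem_insert_self _ _⟩,
      ⟨_, rfl, Finset.mem_insert_of_mem (Finset.mem_singleton_self _)⟩⟩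

lemma deg_filter {n : ℕ} (f : {s : Finset (Fin (n + 2)) // s.card = 2} ↪ Fin (n ^ 2 + n + 1))
    (p : Fin (n ^ 2 + n + 1)) :
    (Finset.univ.filter fun i => p ∈ pline f i).card = 0 ∨
    (Finset.univ.filter fun i => p ∈ pline f i).card = 2 := by
  by_cases hp : ∃ s, f s = p
  · right
    obtain ⟨s, rfl⟩ := hp
    have hset : (Finset.univ.filter fun i => f s ∈ pline f i) = s.1 := by
      ext i
      simp only [Finset.mem_filter, Finset.mem_univ, true_and, mem_pline_iff]
      constructor
      · rintro ⟨t, ht, hi⟩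
        obtain rfl := f.injective ht
        exact hi
      · intro hi
        exact ⟨s, rfl, hi⟩
    rw [hset, s.2]
  · left
    rw [Finset.card_eq_zero, Finset.filter_eq_empty_iff]
    intro i _
    rw [mem_pline_iff]
    rintro ⟨s, hs, -⟩
    exact hp ⟨s, hs⟩

lemma pline_injective {n : ℕ} (hn : 1 ≤ n)
    (f : {s : Finset (Fin (n + 2)) // s.card = 2} ↪ Fin (n ^ 2 + n + 1)) :
    Function.Injective (pline f) := by
  intro i k h
  by_contra hik
  have h1 := pline_inter f hik
  rw [h, Finset.inter_self] at h1
  have h2 := card_pline f k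
  rw [h1, Finset.card_singleton] at h2
  omega

end SPPPAux

/-- For every odd `n ≥ 3` there is a saturated pure partial plane of order `n`, of
size `n + 2`, in which every point has degree at most 2. -/
theorem exists_sppp_odd_order_degree_le_two (n : ℕ) (hn : 3 ≤ n) (hodd : Odd n) :
    ∃ L : Finset (Finset (Fin (n ^ 2 + n + 1))),
      IsPPP n L ∧ IsSaturated n L ∧ (∀ p, ppDeg L p ≤ 2) ∧ L.card = n + 2 := by
  classical
  open SPPPAux in
  -- obtain an embedding of the 2-element subsets of `Fin (n+2)` into the point set
  have hcard : Fintype.card {s : Finset (Fin (n + 2)) // s.card = 2}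
      ≤ Fintype.card (Fin (n ^ 2 + n + 1)) := by
    rw [Fintype.card_finset_len, Fintype.card_fin, Fintype.card_fin]
    have hnn : n + 2 ≤ n ^ 2 := by nlinarith
    have hch : (n + 2).choose 2 = (n ^ 2 + 3 * n + 2) / 2 := by
      rw [Nat.choose_two_right]
      congr 1
      have h21 : n + 2 - 1 = n + 1 := by omega
      rw [h21]; ring
    rw [hch]
    generalize n ^ 2 = m at hnn ⊢
    omega
  obtain ⟨f⟩ := Function.Embedding.nonempty_of_card_le hcard
  refine ⟨Finset.univ.image (pline f), ⟨?_, ?_⟩, ?_, ?_, ?_⟩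
  · -- each line has n+1 points
    intro ℓ hℓ
    obtain ⟨i, -, rfl⟩ := Finset.mem_image.mp hℓ
    exact card_pline f i
  · -- any two distinct lines meet in one point
    intro ℓ₁ h₁ ℓ₂ h₂ hne
    obtain ⟨i, -, rfl⟩ := Finset.mem_image.mp h₁
    obtain ⟨k, -, rfl⟩ := Finset.mem_image.mp h₂
    have hik : i ≠ k := fun h => hne (congrArg _ h)
    rw [pline_inter f hik, Finset.card_singleton]
  · -- saturation, by parity
    rintro ⟨ℓ', -, hcard', hmeet⟩
    have hmeet' : ∀ i, (ℓ' ∩ pline f i).card = 1 := fun i =>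
      hmeet _ (Finset.mem_image_of_mem _ (Finset.mem_univ i))
    have key : ∀ t : Finset (Fin (n ^ 2 + n + 1)),
        (ℓ' ∩ t).card = ∑ p ∈ ℓ', if p ∈ t then 1 else 0 := by
      intro t
      rw [← Finset.filter_mem_eq_inter, Finset.card_filter]
    have hsum : (n + 2 : ℕ)
        = ∑ p ∈ ℓ', (Finset.univ.filter fun i => p ∈ pline f i).card := by
      calc (n + 2 : ℕ) = ∑ _i : Fin (n + 2), 1 := by simp
        _ = ∑ i : Fin (n + 2), (ℓ' ∩ pline f i).card :=
            Finset.sum_congr rfl fun i _ => (hmeet' i).symm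
        _ = ∑ i : Fin (n + 2), ∑ p ∈ ℓ', if p ∈ pline f i then 1 else 0 :=
            Finset.sum_congr rfl fun i _ => key _
        _ = ∑ p ∈ ℓ', ∑ i : Fin (n + 2), if p ∈ pline f i then 1 else 0 := Finset.sum_comm
        _ = ∑ p ∈ ℓ', (Finset.univ.filter fun i => p ∈ pline f i).card :=
            Finset.sum_congr rfl fun p _ => (Finset.card_filter _ _).symm
    have hdvd : 2 ∣ ∑ p ∈ ℓ', (Finset.univ.filter fun i => p ∈ pline f i).card := by
      refine Finset.dvd_sum fun p _ => ?_
      rcases deg_filter f p with h | h <;> omega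
    obtain ⟨k, hk⟩ := hodd
    obtain ⟨c, hc⟩ := hdvd
    omega
  · -- degree at most 2
    intro p
    unfold ppDeg
    rw [Finset.filter_image, Finset.card_image_of_injective _ (pline_injective (by omega) f)]
    rcases deg_filter f p with h | h <;> omega
  · rw [Finset.card_image_of_injective _ (pline_injective (by omega) f), Finset.card_univ,
      Fintype.card_fin]
end

section
/- Two pure partial planes of the same order n, neither of which is a finite projective plane (i.e., each has size different from n^2+n+1), are isomorphic if and only if their point-line-adjacency graphs are isomorphic as simple graphs. -/
/-- The point-line-adjacency graph of a PPP: the simple bipartite graph whose vertices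
are the points and the lines, with a point-vertex adjacent to a line-vertex iff the
line contains the point. -/
def PLGraph (n : ℕ) (L : Finset (Finset (Fin (n ^ 2 + n + 1)))) :
    SimpleGraph (Fin (n ^ 2 + n + 1) ⊕ {ℓ : Finset (Fin (n ^ 2 + n + 1)) // ℓ ∈ L}) where
  Adj v w :=
    (∃ p ℓ, v = Sum.inl p ∧ w = Sum.inr ℓ ∧ p ∈ ℓ.1) ∨
    (∃ p ℓ, v = Sum.inr ℓ ∧ w = Sum.inl p ∧ p ∈ ℓ.1)
  symm := by
    constructor
    rintro v w (⟨p, ℓ, rfl, rfl, h⟩ | ⟨p, ℓ, rfl, rfl, h⟩)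
    · exact Or.inr ⟨p, ℓ, rfl, rfl, h⟩
    · exact Or.inl ⟨p, ℓ, rfl, rfl, h⟩
  loopless := by
    constructor
    rintro v (⟨p, ℓ, rfl, h, -⟩ | ⟨p, ℓ, rfl, h, -⟩) <;> simp at h

/-- Two PPPs (on the same point set) are isomorphic if there are a bijection of the
points and a bijection of the lines under which the incidence relation is preserved. -/
def PPPIso (n : ℕ) (L₁ L₂ : Finset (Finset (Fin (n ^ 2 + n + 1)))) : Prop :=
  ∃ (e : Fin (n ^ 2 + n + 1) ≃ Fin (n ^ 2 + n + 1))
    (f : {ℓ : Finset (Fin (n ^ 2 + n + 1)) // ℓ ∈ L₁} ≃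
         {ℓ : Finset (Fin (n ^ 2 + n + 1)) // ℓ ∈ L₂}),
    ∀ (p : Fin (n ^ 2 + n + 1)) (ℓ : {ℓ : Finset (Fin (n ^ 2 + n + 1)) // ℓ ∈ L₁}),
      p ∈ ℓ.1 ↔ e p ∈ (f ℓ).1

/-! A graph isomorphism `σ` between point-line graphs that maps points to points and lines to
lines is an isomorphism of the planes. Suppose instead that `σ` maps some line to a point. Any two
lines meet, so their images have a common neighbour and lie on the same side: `σ` maps every line
to a point. Then every point on a line is sent to a line, so it lies on exactly `n + 1` lines, and
counting the lines through the points of one fixed line gives `n² + n + 1` lines, a projective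
plane. Once lines go to lines, so do points: a point sent to a line `m` is adjacent to the preimage
of a point of `m`, which would be a line sent to a point. -/

open Finset Sum

theorem Equiv.exists_eq_sumCongr {α β γ δ : Type*} (σ : α ⊕ β ≃ γ ⊕ δ)
    (h : ∀ v, (σ v).isLeft = v.isLeft) : ∃ (e : α ≃ γ) (f : β ≃ δ), σ = e.sumCongr f := by
  have hr : ∀ v, v.isRight ↔ (σ v).isRight := fun v => by
    rw [← Sum.not_isLeft, ← Sum.not_isLeft, h]
  refine ⟨sumIsLeft.symm.trans ((σ.subtypeEquiv fun v => by rw [h]).trans sumIsLeft),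
    sumIsRight.symm.trans ((σ.subtypeEquiv hr).trans sumIsRight), ?_⟩
  ext (a | b) <;> simp

theorem IsPPP.card_eq_of_ppDeg_eq {n : ℕ} {L : Finset (Finset (Fin (n ^ 2 + n + 1)))}
    (h : IsPPP n L) (hne : L.Nonempty) (hdeg : ∀ ℓ ∈ L, ∀ p ∈ ℓ, ppDeg L p = n + 1) :
    #L = n ^ 2 + n + 1 := by
  obtain ⟨ℓ, hℓ⟩ := hne
  have hfiber : ∀ p ∈ ℓ, #{m ∈ L.erase ℓ | p ∈ m} = n := fun p hp => by
    rw [filter_erase, card_erase_of_mem (mem_filter.mpr ⟨hℓ, hp⟩)]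
    have hdegp := hdeg ℓ hℓ p hp
    rw [ppDeg] at hdegp
    omega
  have hcount := sum_card_inter hfiber
  rw [sum_congr rfl fun m hm => h.2 ℓ hℓ m (mem_of_mem_erase hm) (ne_of_mem_erase hm).symm,
    sum_const, smul_eq_mul, mul_one, card_erase_of_mem hℓ, h.1 ℓ hℓ] at hcount
  rw [Nat.eq_add_of_sub_eq (card_pos.mpr ⟨ℓ, hℓ⟩) hcount]
  ring

theorem IsPPP.intersecting {n : ℕ} {L : Finset (Finset (Fin (n ^ 2 + n + 1)))} (h : IsPPP n L) :
    (L : Set (Finset (Fin (n ^ 2 + n + 1)))).Intersecting := by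
  intro ℓ hℓ m hm
  rw [not_disjoint_iff_nonempty_inter, ← card_pos]
  obtain rfl | hne := eq_or_ne ℓ m
  · rw [inter_self, h.1 ℓ hℓ]
    omega
  · rw [h.2 ℓ hℓ m hm hne]
    omega

namespace PLGraph

variable {n : ℕ} {L L₁ L₂ : Finset (Finset (Fin (n ^ 2 + n + 1)))}

@[simp]
lemma not_adj_inl_inl {p q : Fin (n ^ 2 + n + 1)} : ¬(PLGraph n L).Adj (inl p) (inl q) := by
  simp [PLGraph]

@[simp]
lemma adj_inl_inr {p : Fin (n ^ 2 + n + 1)} {ℓ : {ℓ // ℓ ∈ L}} :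
    (PLGraph n L).Adj (inl p) (inr ℓ) ↔ p ∈ ℓ.1 := by
  simp [PLGraph]

@[simp]
lemma adj_inr_inl {p : Fin (n ^ 2 + n + 1)} {ℓ : {ℓ // ℓ ∈ L}} :
    (PLGraph n L).Adj (inr ℓ) (inl p) ↔ p ∈ ℓ.1 := by
  simp [PLGraph]

@[simp]
lemma not_adj_inr_inr {ℓ m : {ℓ // ℓ ∈ L}} : ¬(PLGraph n L).Adj (inr ℓ) (inr m) := by
  simp [PLGraph]

lemma isLeft_eq_not_of_adj {v w} (h : (PLGraph n L).Adj v w) : v.isLeft = !w.isLeft := by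
  rcases v with p | ℓ <;> rcases w with q | m <;> simp_all

lemma card_neighborSet_inr (ℓ : {ℓ // ℓ ∈ L}) :
    Nat.card ((PLGraph n L).neighborSet (inr ℓ)) = #ℓ.1 := by
  have : (PLGraph n L).neighborSet (inr ℓ) = inl '' (ℓ.1 : Set (Fin (n ^ 2 + n + 1))) := by
    ext (q | m) <;> simp
  rw [this, Nat.card_image_of_injective inl_injective, Nat.card_coe_set_eq, Set.ncard_coe_finset]

lemma card_neighborSet_inl (p : Fin (n ^ 2 + n + 1)) :
    Nat.card ((PLGraph n L).neighborSet (inl p)) = ppDeg L p := by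
  have : (PLGraph n L).neighborSet (inl p) = inr '' {ℓ | p ∈ ℓ.1} := by
    ext (q | m) <;> simp
  rw [this, Nat.card_image_of_injective inr_injective, Set.coe_ofPred, Nat.card_eq_fintype_card,
    Fintype.card_subtype, univ_eq_attach, filter_attach (fun ℓ => p ∈ ℓ), card_map, card_attach,
    ppDeg]

theorem pppIso_iff_exists_iso_eq_sumCongr :
    PPPIso n L₁ L₂ ↔ ∃ σ : PLGraph n L₁ ≃g PLGraph n L₂, ∃ e f, σ.toEquiv = Equiv.sumCongr e f := by
  constructor
  · rintro ⟨e, f, hef⟩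
    refine ⟨⟨e.sumCongr f, ?_⟩, e, f, rfl⟩
    rintro (p | ℓ) (q | m) <;> simp [hef]
  · rintro ⟨σ, e, f, hσ⟩
    have hσ' : ∀ v, σ v = e.sumCongr f v := fun v => by rw [← hσ]; rfl
    refine ⟨e, f, fun p ℓ => ?_⟩
    simpa [hσ'] using (σ.map_rel_iff (a := inl p) (b := inr ℓ)).symm

namespace Iso

variable (σ : PLGraph n L₁ ≃g PLGraph n L₂)

lemma ppDeg_eq_card_neighborSet_map (p : Fin (n ^ 2 + n + 1)) :
    ppDeg L₁ p = Nat.card ((PLGraph n L₂).neighborSet (σ (inl p))) := by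
  rw [← card_neighborSet_inl, Nat.card_congr (σ.mapNeighborSet (inl p))]

lemma isLeft_map_inr_eq (hL : (L₁ : Set (Finset (Fin (n ^ 2 + n + 1)))).Intersecting)
    (ℓ m : {ℓ // ℓ ∈ L₁}) : (σ (inr ℓ)).isLeft = (σ (inr m)).isLeft := by
  obtain ⟨a, haℓ, ham⟩ := not_disjoint_iff.mp (hL ℓ.2 m.2)
  apply Bool.not_inj
  rw [← isLeft_eq_not_of_adj (σ.map_rel_iff.mpr (adj_inl_inr.mpr haℓ)),
    ← isLeft_eq_not_of_adj (σ.map_rel_iff.mpr (adj_inl_inr.mpr ham))]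

lemma card_eq_of_map_inr_eq_inl (h₁ : IsPPP n L₁) (h₂ : ∀ m ∈ L₂, #m = n + 1)
    {ℓ₀ : {ℓ // ℓ ∈ L₁}} {q₀ : Fin (n ^ 2 + n + 1)} (hσ : σ (inr ℓ₀) = inl q₀) :
    #L₁ = n ^ 2 + n + 1 := by
  refine h₁.card_eq_of_ppDeg_eq ⟨ℓ₀.1, ℓ₀.2⟩ fun ℓ hℓ p hp => ?_
  have hℓσ : (σ (inr ⟨ℓ, hℓ⟩)).isLeft := by
    rw [isLeft_map_inr_eq σ h₁.intersecting _ ℓ₀, hσ, isLeft_inl]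
  have hadj := σ.map_rel_iff.mpr ((adj_inl_inr (ℓ := ⟨ℓ, hℓ⟩)).mpr hp)
  obtain ⟨m, hm⟩ := isRight_iff.mp (by simpa [hℓσ] using isLeft_eq_not_of_adj hadj)
  rw [ppDeg_eq_card_neighborSet_map σ, hm, card_neighborSet_inr, h₂ m.1 m.2]

lemma isRight_map_inr (h₁ : IsPPP n L₁) (h₂ : ∀ m ∈ L₂, #m = n + 1)
    (hs₁ : #L₁ ≠ n ^ 2 + n + 1) (ℓ : {ℓ // ℓ ∈ L₁}) : (σ (inr ℓ)).isRight := by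
  rcases hσ : σ (inr ℓ) with q | m
  · exact absurd (card_eq_of_map_inr_eq_inl σ h₁ h₂ hσ) hs₁
  · rfl

lemma isLeft_map (h₂ : ∀ m ∈ L₂, m.Nonempty) (hlines : ∀ ℓ, (σ (inr ℓ)).isRight) :
    ∀ v, (σ v).isLeft = v.isLeft := by
  rintro (p | ℓ)
  · rcases hσ : σ (inl p) with q | m
    · rfl
    obtain ⟨q, hq⟩ := h₂ m.1 m.2
    have hadj : (PLGraph n L₁).Adj (inl p) (σ.symm (inl q)) := by
      rw [← σ.map_rel_iff, hσ, σ.apply_symm_apply, adj_inr_inl]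
      exact hq
    obtain ⟨ℓ, hℓ⟩ := isRight_iff.mp (by simpa using isLeft_eq_not_of_adj hadj)
    simpa [← hℓ] using hlines ℓ
  · simpa using hlines ℓ

end Iso

end PLGraph

theorem ppp_iso_iff_graph_iso_general (n : ℕ) (L₁ L₂ : Finset (Finset (Fin (n ^ 2 + n + 1))))
    (h₁ : IsPPP n L₁) (h₂ : IsPPP n L₂)
    (hs₁ : L₁.card ≠ n ^ 2 + n + 1) :
    PPPIso n L₁ L₂ ↔ Nonempty (PLGraph n L₁ ≃g PLGraph n L₂) := by
  rw [PLGraph.pppIso_iff_exists_iso_eq_sumCongr]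
  refine ⟨fun ⟨σ, _⟩ => ⟨σ⟩, fun ⟨σ⟩ => ⟨σ, ?_⟩⟩
  have hlines := PLGraph.Iso.isRight_map_inr σ h₁ h₂.1 hs₁
  have hne₂ : ∀ m ∈ L₂, m.Nonempty := fun m hm => card_pos.mp (by rw [h₂.1 m hm]; omega)
  exact σ.toEquiv.exists_eq_sumCongr (PLGraph.Iso.isLeft_map σ hne₂ hlines)

/-- Two pure partial planes of the same order `n`, neither of which is a finite
projective plane (each has size different from `n²+n+1`), are isomorphic iff their
point-line-adjacency graphs are isomorphic. -/
theorem ppp_iso_iff_graph_iso (n : ℕ) (L₁ L₂ : Finset (Finset (Fin (n ^ 2 + n + 1))))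
    (h₁ : IsPPP n L₁) (h₂ : IsPPP n L₂)
    (hs₁ : L₁.card ≠ n ^ 2 + n + 1) (hs₂ : L₂.card ≠ n ^ 2 + n + 1) :
    PPPIso n L₁ L₂ ↔ Nonempty (PLGraph n L₁ ≃g PLGraph n L₂) :=
  ppp_iso_iff_graph_iso_general n L₁ L₂ h₁ h₂ hs₁
end

section
/- Let a PPP of order n and size s have the property that every point has degree at most 2, and let a_1 and a_2 denote the number of points of degree exactly 1 and exactly 2, respectively. Then a_1 = s·(n+2−s) and a_2 = s(s−1)/2; in particular s ≤ n+2. -/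
/-- If every point of a PPP of order `n` and size `s` has degree at most 2, then
`a₁ = s·(n+2−s)`, `a₂ = s(s−1)/2`, and in particular `s ≤ n+2`. -/
theorem ppp_degree_le_two_counts (n : ℕ) (L : Finset (Finset (Fin (n ^ 2 + n + 1))))
    (hL : IsPPP n L) (hdeg : ∀ p, ppDeg L p ≤ 2) :
    (Finset.univ.filter fun p => ppDeg L p = 1).card = L.card * (n + 2 - L.card) ∧
    (Finset.univ.filter fun p => ppDeg L p = 2).card = L.card * (L.card - 1) / 2 ∧
    L.card ≤ n + 2 := by
  obtain ⟨hcard, hint⟩ := hL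
  set s := L.card with hs
  -- a₂ = s.choose 2 via bijection
  have ha2 : (Finset.univ.filter fun p => ppDeg L p = 2).card = s.choose 2 := by
    rw [← Finset.card_powersetCard 2 L]
    apply Finset.card_bij (fun p _ => L.filter fun ℓ => p ∈ ℓ)
    · intro p hp
      simp only [Finset.mem_filter, Finset.mem_univ, true_and] at hp
      rw [Finset.mem_powersetCard]
      exact ⟨Finset.filter_subset _ _, hp⟩
    · intro p hp q hq hpq
      simp only [Finset.mem_filter, Finset.mem_univ, true_and] at hp hq
      by_contra hne
      obtain ⟨ℓ₁, ℓ₂, h12, hset⟩ := Finset.card_eq_two.mp hp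
      have hℓ₁L : ℓ₁ ∈ L.filter fun ℓ => p ∈ ℓ := by rw [hset]; simp
      have hℓ₂L : ℓ₂ ∈ L.filter fun ℓ => p ∈ ℓ := by rw [hset]; simp
      have hℓ₁L' := hℓ₁L; have hℓ₂L' := hℓ₂L
      rw [hpq] at hℓ₁L' hℓ₂L'
      simp only [Finset.mem_filter] at hℓ₁L hℓ₂L hℓ₁L' hℓ₂L'
      have hone := hint ℓ₁ hℓ₁L.1 ℓ₂ hℓ₂L.1 h12
      have : ({p, q} : Finset _) ⊆ ℓ₁ ∩ ℓ₂ := by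
        intro x hx
        simp only [Finset.mem_insert, Finset.mem_singleton] at hx
        rcases hx with rfl | rfl <;> simp_all [Finset.mem_inter]
      have := Finset.card_le_card this
      rw [Finset.card_pair hne, hone] at this
      omega
    · intro S hS
      rw [Finset.mem_powersetCard] at hS
      obtain ⟨hSL, hS2⟩ := hS
      obtain ⟨ℓ₁, ℓ₂, h12, rfl⟩ := Finset.card_eq_two.mp hS2
      have hℓ₁ : ℓ₁ ∈ L := hSL (by simp)
      have hℓ₂ : ℓ₂ ∈ L := hSL (by simp)
      have hone := hint ℓ₁ hℓ₁ ℓ₂ hℓ₂ h12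
      obtain ⟨p, hp⟩ := Finset.card_eq_one.mp hone
      have hp1 : p ∈ ℓ₁ := by
        have : p ∈ ℓ₁ ∩ ℓ₂ := by rw [hp]; simp
        exact (Finset.mem_inter.mp this).1
      have hp2 : p ∈ ℓ₂ := by
        have : p ∈ ℓ₁ ∩ ℓ₂ := by rw [hp]; simp
        exact (Finset.mem_inter.mp this).2
      have hsub : ({ℓ₁, ℓ₂} : Finset _) ⊆ L.filter fun ℓ => p ∈ ℓ := by
        intro x hx
        simp only [Finset.mem_insert, Finset.mem_singleton] at hx
        rcases hx with rfl | rfl <;> simp_all [Finset.mem_filter]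
      have h2le : 2 ≤ ppDeg L p := by
        have := Finset.card_le_card hsub
        rwa [Finset.card_pair h12] at this
      have hdp : ppDeg L p = 2 := le_antisymm (hdeg p) h2le
      refine ⟨p, by simp [hdp], ?_⟩
      refine (Finset.eq_of_subset_of_card_le hsub ?_).symm
      rw [Finset.card_pair h12]
      exact hdeg p
  -- sum of degrees
  have hsum : ∑ p, ppDeg L p = s * (n + 1) := by
    unfold ppDeg
    simp only [Finset.card_filter]
    rw [Finset.sum_comm]
    have : ∀ ℓ ∈ L, (∑ p : Fin (n ^ 2 + n + 1), if p ∈ ℓ then 1 else 0) = n + 1 := by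
      intro ℓ hℓ
      simp only [Finset.sum_ite_mem, Finset.univ_inter, Finset.sum_const, smul_eq_mul, mul_one]
      exact hcard ℓ hℓ
    rw [Finset.sum_congr rfl this, Finset.sum_const, smul_eq_mul]
  have key : (Finset.univ.filter fun p => ppDeg L p = 1).card
      + 2 * (Finset.univ.filter fun p => ppDeg L p = 2).card = s * (n + 1) := by
    calc (Finset.univ.filter fun p => ppDeg L p = 1).card
        + 2 * (Finset.univ.filter fun p => ppDeg L p = 2).card
        = ∑ p, ((if ppDeg L p = 1 then 1 else 0) + 2 * (if ppDeg L p = 2 then 1 else 0)) := by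
          rw [Finset.sum_add_distrib, ← Finset.mul_sum]
          simp only [Finset.card_filter]
      _ = ∑ p, ppDeg L p := Finset.sum_congr rfl fun p _ => by
          have h := hdeg p
          rcases (by omega : ppDeg L p = 0 ∨ ppDeg L p = 1 ∨ ppDeg L p = 2) with h' | h' | h' <;>
            simp [h']
      _ = s * (n + 1) := hsum
  have h2c : 2 * s.choose 2 = s * (s - 1) := by
    rw [Nat.choose_two_right]
    rw [Nat.mul_div_cancel']
    match s with
    | 0 => simp
    | t + 1 =>
      simpa [Nat.mul_comm] using (Nat.even_mul_succ_self t).two_dvd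
  rw [ha2, h2c] at key
  have hsle : s ≤ n + 2 := by
    rcases Nat.eq_zero_or_pos s with h0 | h0
    · omega
    · have hle : s * (s - 1) ≤ s * (n + 1) := by omega
      have := Nat.le_of_mul_le_mul_left hle h0
      omega
  refine ⟨?_, ?_, hsle⟩
  · have heq : s * (n + 2 - s) + s * (s - 1) = s * (n + 1) := by
      rcases Nat.eq_zero_or_pos s with h0 | h0
      · simp [h0]
      · rw [← Nat.mul_add]
        congr 1
        omega
    omega
  · rw [ha2, Nat.choose_two_right]
end

section
/- There is no pure partial plane of order 6 and size 26 in which every point has degree belonging to {0, 4, 5}. (Indeed, the counting identities would force 5·a_5 + 4·a_4 = 182 and 2·a_4 = 39, which have no integer solutions.) -/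
/-- There is no pure partial plane of order 6 and size 26 in which every point has
degree 0, 4 or 5. -/
theorem no_ppp_order_six_size_26_degrees_in_045 :
    ¬ ∃ L : Finset (Finset (Fin (6 ^ 2 + 6 + 1))), IsPPP 6 L ∧ L.card = 26 ∧
        ∀ p, ppDeg L p = 0 ∨ ppDeg L p = 4 ∨ ppDeg L p = 5 := by
  rintro ⟨L, ⟨hcard, hint⟩, hL, hdeg⟩
  have hdeg_sum : ∀ p, ppDeg L p = ∑ ℓ ∈ L, if p ∈ ℓ then 1 else 0 := by
    intro p; unfold ppDeg; rw [Finset.card_filter]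
  -- Sum of degrees = 26 * 7 = 182
  have hS1 : ∑ p, ppDeg L p = 182 := by
    calc ∑ p, ppDeg L p = ∑ p, ∑ ℓ ∈ L, if p ∈ ℓ then 1 else 0 := by
          exact Finset.sum_congr rfl fun p _ => hdeg_sum p
      _ = ∑ ℓ ∈ L, ∑ p, if p ∈ ℓ then 1 else 0 := Finset.sum_comm
      _ = ∑ ℓ ∈ L, ℓ.card := by
          refine Finset.sum_congr rfl fun ℓ _ => ?_
          rw [← Finset.card_filter, Finset.filter_univ_mem]
      _ = ∑ ℓ ∈ L, 7 := Finset.sum_congr rfl fun ℓ hℓ => hcard ℓ hℓ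
      _ = 182 := by rw [Finset.sum_const, hL]; rfl
  -- Sum of squared degrees = 26 * (7 + 25) = 832
  have hS2 : ∑ p, (ppDeg L p) ^ 2 = 832 := by
    have step : ∀ p, (ppDeg L p) ^ 2
        = ∑ ℓ₁ ∈ L, ∑ ℓ₂ ∈ L, if p ∈ ℓ₁ ∩ ℓ₂ then 1 else 0 := by
      intro p
      rw [hdeg_sum p, sq, Finset.sum_mul_sum]
      refine Finset.sum_congr rfl fun ℓ₁ _ => Finset.sum_congr rfl fun ℓ₂ _ => ?_
      by_cases h1 : p ∈ ℓ₁ <;> by_cases h2 : p ∈ ℓ₂ <;>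
        simp [h1, h2, Finset.mem_inter]
    calc ∑ p, (ppDeg L p) ^ 2
        = ∑ p, ∑ ℓ₁ ∈ L, ∑ ℓ₂ ∈ L, if p ∈ ℓ₁ ∩ ℓ₂ then 1 else 0 :=
          Finset.sum_congr rfl fun p _ => step p
      _ = ∑ ℓ₁ ∈ L, ∑ p, ∑ ℓ₂ ∈ L, if p ∈ ℓ₁ ∩ ℓ₂ then 1 else 0 := Finset.sum_comm
      _ = ∑ ℓ₁ ∈ L, ∑ ℓ₂ ∈ L, ∑ p, if p ∈ ℓ₁ ∩ ℓ₂ then 1 else 0 :=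
          Finset.sum_congr rfl fun _ _ => Finset.sum_comm
      _ = ∑ ℓ₁ ∈ L, ∑ ℓ₂ ∈ L, (ℓ₁ ∩ ℓ₂).card := by
          refine Finset.sum_congr rfl fun ℓ₁ _ => Finset.sum_congr rfl fun ℓ₂ _ => ?_
          rw [← Finset.card_filter, Finset.filter_univ_mem]
      _ = ∑ ℓ₁ ∈ L, ∑ ℓ₂ ∈ L, (if ℓ₂ = ℓ₁ then 7 else 1) := by
          refine Finset.sum_congr rfl fun ℓ₁ h₁ => Finset.sum_congr rfl fun ℓ₂ h₂ => ?_
          by_cases h : ℓ₂ = ℓ₁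
          · subst h; simp [Finset.inter_self, hcard ℓ₂ h₂]
          · simp [h, hint ℓ₁ h₁ ℓ₂ h₂ (Ne.symm h)]
      _ = ∑ ℓ₁ ∈ L, (∑ ℓ₂ ∈ L, 1 + ∑ ℓ₂ ∈ L, if ℓ₂ = ℓ₁ then 6 else 0) := by
          refine Finset.sum_congr rfl fun ℓ₁ _ => ?_
          rw [← Finset.sum_add_distrib]
          refine Finset.sum_congr rfl fun ℓ₂ _ => ?_
          by_cases h : ℓ₂ = ℓ₁ <;> simp [h]
      _ = ∑ ℓ₁ ∈ L, 32 := by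
          refine Finset.sum_congr rfl fun ℓ₁ h₁ => ?_
          rw [Finset.sum_const, Finset.sum_ite_eq' L ℓ₁ fun _ => 6]
          simp [hL, h₁]
      _ = 832 := by rw [Finset.sum_const, hL]; rfl
  -- For each point, 5*d = d^2 + (4 if d = 4 else 0)
  have key : ∀ p, 5 * ppDeg L p
      = (ppDeg L p) ^ 2 + (if ppDeg L p = 4 then 4 else 0) := by
    intro p
    rcases hdeg p with h | h | h <;> rw [h] <;> norm_num
  have hsum : ∑ p, 5 * ppDeg L p
      = ∑ p, ((ppDeg L p) ^ 2 + if ppDeg L p = 4 then 4 else 0) :=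
    Finset.sum_congr rfl fun p _ => key p
  rw [← Finset.mul_sum, hS1, Finset.sum_add_distrib, hS2] at hsum
  -- 910 = 832 + sum of terms each in {0,4}: the remainder 78 isn't divisible by 4
  have hdvd : 4 ∣ ∑ p : Fin (6 ^ 2 + 6 + 1), (if ppDeg L p = 4 then 4 else 0) :=
    Finset.dvd_sum fun p _ => by by_cases h : ppDeg L p = 4 <;> simp [h]
  omega
end

section
/- There is no pure partial plane of order 6 in which exactly one point has degree 7 and every other point has degree belonging to {3, 4, 5}. (Indeed, if such a plane had size s, the counting identities would force the number a_4 of points of degree 4 to equal 50s − s^2 − 637 = −12 − (s−25)^2 < 0, a contradiction.) -/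
/-!
Double counting incidences and pairs of lines through a common point gives, for a pure partial
plane of order `n` with `s` lines, `∑ d = (n + 1) s` and `∑ d² = s (s + n)`, the sums running
over the degrees `d` of all `n² + n + 1` points. For `n = 6` this makes
`∑ (d - 3)(d - 5) = s² - 50 s + 645`. The summand is nonpositive for `d ∈ {3, 4, 5}` and equals
`8` for `d = 7`, so `s² - 50 s + 637 = (s - 25)² + 12 ≤ 0`, which is absurd.
-/

open Finset

section DoubleCounting

variable {α : Type*} [Fintype α] [DecidableEq α] (L : Finset (Finset α))

theorem sum_card_filter_mem_eq_sum_card :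
    ∑ p, #{ℓ ∈ L | p ∈ ℓ} = ∑ ℓ ∈ L, #ℓ := by
  simpa only [bipartiteAbove, bipartiteBelow, filter_mem_eq_of_subset (subset_univ _)] using
    sum_card_bipartiteAbove_eq_sum_card_bipartiteBelow (s := univ) (t := L) (· ∈ ·)

theorem sum_card_filter_mem_sq_eq_sum_card_inter :
    ∑ p, #{ℓ ∈ L | p ∈ ℓ} ^ 2 = ∑ ℓ₁ ∈ L, ∑ ℓ₂ ∈ L, #(ℓ₁ ∩ ℓ₂) := by
  have hsq (p : α) : #{ℓ ∈ L | p ∈ ℓ} ^ 2 = #{x ∈ L ×ˢ L | p ∈ x.1 ∧ p ∈ x.2} := by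
    rw [sq, ← card_product, ← filter_product]
  simp_rw [hsq, ← sum_product' (f := fun ℓ₁ ℓ₂ => #(ℓ₁ ∩ ℓ₂)), ← mem_inter]
  simpa only [bipartiteAbove, bipartiteBelow, filter_mem_eq_inter, univ_inter] using
    sum_card_bipartiteAbove_eq_sum_card_bipartiteBelow (s := univ) (t := L ×ˢ L)
      (fun p x => p ∈ x.1 ∩ x.2)

end DoubleCounting

section PurePartialPlane

variable {n : ℕ} {L : Finset (Finset (Fin (n ^ 2 + n + 1)))}

theorem IsPPP.sum_card_inter (hL : IsPPP n L) {ℓ : Finset (Fin (n ^ 2 + n + 1))} (hℓ : ℓ ∈ L) :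
    ∑ ℓ' ∈ L, #(ℓ ∩ ℓ') = #L + n := by
  have hother : ∑ ℓ' ∈ L.erase ℓ, #(ℓ ∩ ℓ') = #L - 1 := by
    rw [sum_congr rfl fun ℓ' h => hL.2 ℓ hℓ ℓ' (mem_of_mem_erase h) (ne_of_mem_erase h).symm]
    simp [card_erase_of_mem hℓ]
  rw [← add_sum_erase _ _ hℓ, hother, inter_self, hL.1 ℓ hℓ]
  have := card_pos.2 ⟨ℓ, hℓ⟩
  omega

theorem IsPPP.sum_ppDeg (hL : IsPPP n L) : ∑ p, ppDeg L p = (n + 1) * #L := by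
  simp only [ppDeg]
  rw [sum_card_filter_mem_eq_sum_card, sum_congr rfl hL.1, sum_const,
    smul_eq_mul, mul_comm]

theorem IsPPP.sum_ppDeg_sq (hL : IsPPP n L) : ∑ p, ppDeg L p ^ 2 = #L * (#L + n) := by
  simp only [ppDeg]
  rw [sum_card_filter_mem_sq_eq_sum_card_inter, sum_congr rfl fun _ => hL.sum_card_inter,
    sum_const, smul_eq_mul]

theorem IsPPP.sum_ppDeg_sub_mul_sub (hL : IsPPP n L) (a b : ℤ) :
    ∑ p, ((ppDeg L p : ℤ) - a) * ((ppDeg L p : ℤ) - b) =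
      #L * (#L + n) - (a + b) * ((n + 1) * #L) + a * b * (n ^ 2 + n + 1) := by
  have h1 : ∑ p, (ppDeg L p : ℤ) = (n + 1) * #L := by exact_mod_cast hL.sum_ppDeg
  have h2 : ∑ p, (ppDeg L p : ℤ) ^ 2 = #L * (#L + n) := by exact_mod_cast hL.sum_ppDeg_sq
  have hexp (p) : ((ppDeg L p : ℤ) - a) * ((ppDeg L p : ℤ) - b) =
      (ppDeg L p : ℤ) ^ 2 - (a + b) * ppDeg L p + a * b := by ring
  simp_rw [hexp, sum_add_distrib, sum_sub_distrib, ← mul_sum, h1, h2]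
  simp only [sum_const, card_univ, Fintype.card_fin, nsmul_eq_mul]
  push_cast
  ring

end PurePartialPlane

/-- There is no pure partial plane of order 6 in which exactly one point has degree 7
and every other point has degree 3, 4 or 5. -/
theorem no_ppp_order_six_one_deg7_rest_345 :
    ¬ ∃ (L : Finset (Finset (Fin (6 ^ 2 + 6 + 1)))) (p₀ : Fin (6 ^ 2 + 6 + 1)),
        IsPPP 6 L ∧ ppDeg L p₀ = 7 ∧
        ∀ p, p ≠ p₀ → ppDeg L p = 3 ∨ ppDeg L p = 4 ∨ ppDeg L p = 5 := by
  rintro ⟨L, p₀, hL, hp₀, hrest⟩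
  have hrest_nonpos : ∑ p ∈ univ.erase p₀, ((ppDeg L p : ℤ) - 3) * ((ppDeg L p : ℤ) - 5) ≤ 0 :=
    sum_nonpos fun p hp => by
      rcases hrest p (ne_of_mem_erase hp) with h | h | h <;> rw [h] <;> norm_num
  have hsum := hL.sum_ppDeg_sub_mul_sub 3 5
  rw [← add_sum_erase _ _ (mem_univ p₀), hp₀] at hsum
  simp only [Nat.cast_ofNat] at hsum
  linarith [sq_nonneg ((#L : ℤ) - 25)]
end

section
/- Let A be a pure partial plane of order 6 and size s ≥ 25 containing a point of degree 1, i.e., a point lying on exactly one line L. Then among the other six points of L, either at least four have degree 5, or at least three have degree 5 and a fourth has degree at least 4, provided every point of A has degree at most 5. -/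
/-- In a PPP of order 6 of size at least 25 with all degrees at most 5: if `q` has
degree 1 and lies on the line `ℓ`, then among the other six points of `ℓ` either at
least four have degree 5, or at least three have degree 5 and a fourth has degree at
least 4. -/
theorem ppp_order_six_deg_one_line_structure (L : Finset (Finset (Fin (6 ^ 2 + 6 + 1))))
    (hL : IsPPP 6 L) (hs : 25 ≤ L.card) (hmax : ∀ p, ppDeg L p ≤ 5)
    (q : Fin (6 ^ 2 + 6 + 1)) (hq : ppDeg L q = 1)
    (ℓ : Finset (Fin (6 ^ 2 + 6 + 1))) (hℓ : ℓ ∈ L) (hqℓ : q ∈ ℓ) :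
    4 ≤ ((ℓ.erase q).filter fun p => ppDeg L p = 5).card ∨
    (3 ≤ ((ℓ.erase q).filter fun p => ppDeg L p = 5).card ∧
      4 ≤ ((ℓ.erase q).filter fun p => 4 ≤ ppDeg L p).card) := by
  set S := ℓ.erase q with hS
  set T := L.erase ℓ with hT
  -- q is on no line other than ℓ
  have hqonly : ∀ t ∈ T, q ∉ t := by
    intro t ht hqt
    have htL : t ∈ L := Finset.mem_of_mem_erase ht
    have htne : t ≠ ℓ := Finset.ne_of_mem_erase ht
    have h1 : (L.filter fun ℓ' => q ∈ ℓ').card = 1 := hq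
    have hℓf : ℓ ∈ L.filter fun ℓ' => q ∈ ℓ' := Finset.mem_filter.mpr ⟨hℓ, hqℓ⟩
    have htf : t ∈ L.filter fun ℓ' => q ∈ ℓ' := Finset.mem_filter.mpr ⟨htL, hqt⟩
    obtain ⟨a, ha⟩ := Finset.card_eq_one.mp h1
    rw [ha] at hℓf htf
    exact htne ((Finset.mem_singleton.mp htf).trans (Finset.mem_singleton.mp hℓf).symm)
  -- each line of T meets S in exactly one point
  have hmeet : ∀ t ∈ T, (S.filter fun p => p ∈ t).card = 1 := by
    intro t ht
    have htL : t ∈ L := Finset.mem_of_mem_erase ht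
    have htne : ℓ ≠ t := (Finset.ne_of_mem_erase ht).symm
    have : S.filter (fun p => p ∈ t) = ℓ ∩ t := by
      rw [hS, Finset.filter_erase, Finset.filter_mem_eq_inter]
      exact Finset.erase_eq_of_notMem (fun h => hqonly t ht (Finset.mem_inter.mp h).2)
    rw [this]
    exact hL.2 ℓ hℓ t htL htne
  -- double counting
  have hcount : ∑ p ∈ S, (T.filter fun t => p ∈ t).card = T.card := by
    have := Finset.sum_comm (s := S) (t := T)
      (f := fun p t => if p ∈ t then 1 else 0)
    calc ∑ p ∈ S, (T.filter fun t => p ∈ t).card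
        = ∑ p ∈ S, ∑ t ∈ T, if p ∈ t then 1 else 0 := by
          simp only [Finset.card_filter]
      _ = ∑ t ∈ T, ∑ p ∈ S, if p ∈ t then 1 else 0 := this
      _ = ∑ t ∈ T, (S.filter fun p => p ∈ t).card := by
          simp only [Finset.card_filter]
      _ = ∑ t ∈ T, 1 := Finset.sum_congr rfl fun t ht => hmeet t ht
      _ = T.card := by simp
  have hTcard : 24 ≤ T.card := by
    rw [hT, Finset.card_erase_of_mem hℓ]; omega
  -- rewrite terms as ppDeg - 1
  have hterm : ∀ p ∈ S, (T.filter fun t => p ∈ t).card = ppDeg L p - 1 := by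
    intro p hp
    have hpℓ : p ∈ ℓ := Finset.mem_of_mem_erase hp
    rw [hT, Finset.filter_erase, Finset.card_erase_of_mem
      (Finset.mem_filter.mpr ⟨hℓ, hpℓ⟩)]
    rfl
  have hScard : S.card = 6 := by
    rw [hS, Finset.card_erase_of_mem hqℓ, hL.1 ℓ hℓ]
  -- each point of S has degree exactly 5
  have hdeg5 : ∀ p ∈ S, ppDeg L p = 5 := by
    intro p hp
    by_contra hne
    have hp4 : ppDeg L p - 1 ≤ 3 := by have := hmax p; omega
    have hsum : ∑ x ∈ S, (T.filter fun t => x ∈ t).card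
        = (T.filter fun t => p ∈ t).card
          + ∑ x ∈ S.erase p, (T.filter fun t => x ∈ t).card :=
      (Finset.add_sum_erase S _ hp).symm
    have hbound : ∑ x ∈ S.erase p, (T.filter fun t => x ∈ t).card ≤ 4 * 5 := by
      calc ∑ x ∈ S.erase p, (T.filter fun t => x ∈ t).card
          ≤ ∑ _x ∈ S.erase p, 4 := by
            apply Finset.sum_le_sum
            intro x hx
            rw [hterm x (Finset.mem_of_mem_erase hx)]
            have := hmax x; omega
        _ = (S.erase p).card * 4 := by rw [Finset.sum_const, smul_eq_mul]
        _ ≤ 4 * 5 := by rw [Finset.card_erase_of_mem hp, hScard]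
    rw [hcount, hterm p hp] at hsum
    omega
  left
  have : (S.filter fun p => ppDeg L p = 5) = S := Finset.filter_true_of_mem hdeg5
  rw [this, hScard]; omega
end
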